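/- If w : [0,1] → ℝ is continuous, then the map δ ↦ G_δ(w) is continuous on (0,1]. -/

import Mathlib

open Set

/-- `G δ w = sup_{(s,t) : 0 ≤ s, t ≤ 1, t - s ≥ δ} |w t - w s| / √(t - s)`. -/
noncomputable def G (δ : ℝ) (w : ℝ → ℝ) : ℝ :=
  sSup {x : ℝ | ∃ s t : ℝ, 0 ≤ s ∧ t ≤ 1 ∧ δ ≤ t - s ∧
    x = |w t - w s| / Real.sqrt (t - s)}

/-- supremum norm on `[0,1]` -/
noncomputable def supNorm (v : ℝ → ℝ) : ℝ :=
  sSup {x : ℝ | ∃ t ∈ Set.Icc (0:ℝ) 1, x = |v t|}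

/-- bounded on `[0,1]` -/
def BddOn (w : ℝ → ℝ) : Prop := ∃ C : ℝ, ∀ t ∈ Set.Icc (0:ℝ) 1, |w t| ≤ C

def GSet (δ : ℝ) (w : ℝ → ℝ) : Set ℝ :=
  {x : ℝ | ∃ s t : ℝ, 0 ≤ s ∧ t ≤ 1 ∧ δ ≤ t - s ∧
    x = |w t - w s| / Real.sqrt (t - s)}

lemma G_eq (δ : ℝ) (w : ℝ → ℝ) : G δ w = sSup (GSet δ w) := rfl

lemma GSet_nonempty {δ : ℝ} (w : ℝ → ℝ) (hδ1 : δ ≤ 1) : (GSet δ w).Nonempty :=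
  ⟨|w 1 - w 0| / Real.sqrt (1 - 0), 0, 1, le_refl _, le_refl _, by linarith, rfl⟩

lemma GSet_bound {δ : ℝ} {w : ℝ → ℝ} {C : ℝ} (hδ : 0 < δ)
    (hC : ∀ t ∈ Set.Icc (0:ℝ) 1, |w t| ≤ C) :
    ∀ x ∈ GSet δ w, x ≤ 2 * C / Real.sqrt δ := by
  rintro x ⟨s, t, hs, ht, hst, rfl⟩
  have hts : 0 < t - s := lt_of_lt_of_le hδ hst
  have hsI : s ∈ Set.Icc (0:ℝ) 1 := ⟨hs, by linarith⟩
  have htI : t ∈ Set.Icc (0:ℝ) 1 := ⟨by linarith, ht⟩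
  have h1 : |w t - w s| ≤ 2 * C := by
    calc |w t - w s| ≤ |w t| + |w s| := abs_sub _ _
    _ ≤ 2 * C := by have := hC t htI; have := hC s hsI; linarith
  have hC0 : 0 ≤ C := le_trans (abs_nonneg _) (hC 0 ⟨le_refl _, by norm_num⟩)
  exact div_le_div₀ (by linarith) h1 (Real.sqrt_pos.2 hδ) (Real.sqrt_le_sqrt hst)

lemma GSet_bddAbove {δ : ℝ} {w : ℝ → ℝ} {C : ℝ} (hδ : 0 < δ)
    (hC : ∀ t ∈ Set.Icc (0:ℝ) 1, |w t| ≤ C) : BddAbove (GSet δ w) :=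
  ⟨2 * C / Real.sqrt δ, GSet_bound hδ hC⟩

lemma G_nonneg {δ : ℝ} {w : ℝ → ℝ} {C : ℝ} (hδ : 0 < δ) (hδ1 : δ ≤ 1)
    (hC : ∀ t ∈ Set.Icc (0:ℝ) 1, |w t| ≤ C) : 0 ≤ G δ w := by
  obtain ⟨x, hx⟩ := GSet_nonempty w hδ1
  have hx0 : 0 ≤ x := by
    obtain ⟨s, t, _, _, _, rfl⟩ := hx
    exact div_nonneg (abs_nonneg _) (Real.sqrt_nonneg _)
  exact le_trans hx0 (le_csSup (GSet_bddAbove hδ hC) hx)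

lemma G_le_bound {δ : ℝ} {w : ℝ → ℝ} {C : ℝ} (hδ : 0 < δ) (hδ1 : δ ≤ 1)
    (hC : ∀ t ∈ Set.Icc (0:ℝ) 1, |w t| ≤ C) : G δ w ≤ 2 * C / Real.sqrt δ :=
  csSup_le (GSet_nonempty w hδ1) (GSet_bound hδ hC)

lemma G_anti {δ δ' : ℝ} {w : ℝ → ℝ} {C : ℝ} (hδ : 0 < δ) (hδδ' : δ ≤ δ') (hδ'1 : δ' ≤ 1)
    (hC : ∀ t ∈ Set.Icc (0:ℝ) 1, |w t| ≤ C) : G δ' w ≤ G δ w := by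
  apply csSup_le_csSup (GSet_bddAbove hδ hC) (GSet_nonempty w hδ'1)
  rintro x ⟨s, t, hs, ht, hst, rfl⟩
  exact ⟨s, t, hs, ht, le_trans hδδ' hst, rfl⟩

lemma G_key {δ δ' r ε₁ : ℝ} {w : ℝ → ℝ} {C : ℝ}
    (hδ : 0 < δ) (hδδ' : δ ≤ δ') (hδ'1 : δ' ≤ 1)
    (hC : ∀ t ∈ Set.Icc (0:ℝ) 1, |w t| ≤ C)
    (hε₁ : 0 ≤ ε₁) (hr : δ' - δ ≤ r)
    (hUC : ∀ x ∈ Set.Icc (0:ℝ) 1, ∀ y ∈ Set.Icc (0:ℝ) 1, |x - y| ≤ r → |w x - w y| ≤ ε₁) :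
    G δ w ≤ G δ' w * Real.sqrt (δ' / δ) + 2 * ε₁ / Real.sqrt δ := by
  have hδ'pos : 0 < δ' := lt_of_lt_of_le hδ hδδ'
  have hr0 : 0 ≤ r := le_trans (by linarith) hr
  rw [G_eq]
  apply csSup_le (GSet_nonempty w (le_trans hδδ' hδ'1))
  rintro x ⟨s, t, hs, ht, hst, rfl⟩
  have hts : 0 < t - s := lt_of_lt_of_le hδ hst
  have hsI : s ∈ Set.Icc (0:ℝ) 1 := ⟨hs, by linarith⟩
  have htI : t ∈ Set.Icc (0:ℝ) 1 := ⟨by linarith, ht⟩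
  set L := max (t - s) δ' with hL
  have hLts : t - s ≤ L := le_max_left _ _
  have hLδ' : δ' ≤ L := le_max_right _ _
  have hL1 : L ≤ 1 := max_le (by linarith) hδ'1
  have hLup : L ≤ (t - s) + (δ' - δ) := max_le (by linarith) (by linarith)
  have hLpos : 0 < L := lt_of_lt_of_le hts hLts
  set t' := min 1 (s + L) with ht'def
  have ht'1 : t' ≤ 1 := min_le_left _ _
  have ht't : t ≤ t' := le_min ht (by linarith)
  have ht'sL : t' ≤ s + L := min_le_right _ _
  have ht'L : L ≤ t' := le_min hL1 (by linarith)
  set s' := t' - L with hs'def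
  have hs'0 : 0 ≤ s' := by simp only [hs'def]; linarith
  have hs's : s' ≤ s := by simp only [hs'def]; linarith
  have hts' : t' - s' = L := by simp only [hs'def]; ring
  have hs'I : s' ∈ Set.Icc (0:ℝ) 1 := ⟨hs'0, by linarith⟩
  have ht'I : t' ∈ Set.Icc (0:ℝ) 1 := ⟨by linarith, ht'1⟩
  have hwt : |w t - w t'| ≤ ε₁ :=
    hUC t htI t' ht'I (abs_le.2 ⟨by linarith, by linarith⟩)
  have hws : |w s' - w s| ≤ ε₁ := by
    refine hUC s' hs'I s hsI (abs_le.2 ⟨by linarith, ?_⟩)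
    simp only [hs'def]; linarith
  have htri : |w t - w s| ≤ |w t' - w s'| + 2 * ε₁ := by
    have heq : w t - w s = (w t' - w s') + ((w t - w t') + (w s' - w s)) := by ring
    calc |w t - w s| ≤ |w t' - w s'| + (|w t - w t'| + |w s' - w s|) := by
          rw [heq]; exact le_trans (abs_add_le _ _) (by gcongr <;> exact abs_add_le _ _)
      _ ≤ |w t' - w s'| + 2 * ε₁ := by linarith
  have hy : |w t' - w s'| / Real.sqrt L ≤ G δ' w := by
    rw [G_eq]
    exact le_csSup (GSet_bddAbove hδ'pos hC)
      ⟨s', t', hs'0, ht'1, by rw [hts']; exact hLδ', by rw [hts']⟩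
  have hG0 : 0 ≤ G δ' w := G_nonneg hδ'pos hδ'1 hC
  have hsq : 0 < Real.sqrt (t - s) := Real.sqrt_pos.2 hts
  have hsqδ : 0 < Real.sqrt δ := Real.sqrt_pos.2 hδ
  have hsqL : 0 < Real.sqrt L := Real.sqrt_pos.2 hLpos
  have hratio : Real.sqrt L / Real.sqrt (t - s) ≤ Real.sqrt (δ' / δ) := by
    rw [← Real.sqrt_div hLpos.le]
    apply Real.sqrt_le_sqrt
    rw [div_le_div_iff₀ hts hδ]
    rcases max_cases (t - s) δ' with ⟨h, _⟩ | ⟨h, _⟩ <;>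
      · rw [show L = _ from h]; nlinarith
  calc |w t - w s| / Real.sqrt (t - s)
      ≤ (|w t' - w s'| + 2 * ε₁) / Real.sqrt (t - s) := by gcongr
    _ = |w t' - w s'| / Real.sqrt (t - s) + 2 * ε₁ / Real.sqrt (t - s) := add_div _ _ _
    _ ≤ G δ' w * Real.sqrt (δ' / δ) + 2 * ε₁ / Real.sqrt δ := by
        gcongr ?_ + ?_
        · have heq2 : |w t' - w s'| / Real.sqrt (t - s)
              = (|w t' - w s'| / Real.sqrt L) * (Real.sqrt L / Real.sqrt (t - s)) := by
            field_simp
          rw [heq2]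
          exact mul_le_mul hy hratio (by positivity) hG0
        · exact div_le_div₀ (by linarith) le_rfl hsqδ (Real.sqrt_le_sqrt hst)

lemma sqrt_le_self_of_one_le {y : ℝ} (hy : 1 ≤ y) : Real.sqrt y ≤ y := by
  have h := Real.sqrt_le_sqrt (show y ≤ y ^ 2 by nlinarith)
  rwa [Real.sqrt_sq (by linarith)] at h

theorem G_continuous_in_delta (w : ℝ → ℝ) (hw : ContinuousOn w (Set.Icc (0:ℝ) 1)) :
    ContinuousOn (fun δ : ℝ => G δ w) (Set.Ioc (0:ℝ) 1) := by
  obtain ⟨C, hCn⟩ := (isCompact_Icc (a := (0:ℝ)) (b := 1)).exists_bound_of_continuousOn hw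
  have hC : ∀ t ∈ Set.Icc (0:ℝ) 1, |w t| ≤ C := fun t ht => by
    simpa [Real.norm_eq_abs] using hCn t ht
  have hC0 : 0 ≤ C := le_trans (abs_nonneg _) (hC 0 ⟨le_refl _, by norm_num⟩)
  have hUC := (isCompact_Icc (a := (0:ℝ)) (b := 1)).uniformContinuousOn_of_continuous hw
  rw [Metric.continuousOn_iff]
  intro δ₀ hδ₀ ε hε
  obtain ⟨h0, h1⟩ := hδ₀
  set m := δ₀ / 2 with hm
  have hm0 : 0 < m := by positivity
  have hsqm : 0 < Real.sqrt m := Real.sqrt_pos.2 hm0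
  set B := 2 * C / Real.sqrt m with hBdef
  have hB0 : 0 ≤ B := by positivity
  have hBp : 0 < B + 1 := by linarith
  set ε₁ := ε * Real.sqrt m / 8 with hε₁def
  have hε₁ : 0 < ε₁ := by positivity
  obtain ⟨r, hr0, hrUC⟩ := Metric.uniformContinuousOn_iff_le.1 hUC ε₁ hε₁
  have hUC' : ∀ x ∈ Set.Icc (0:ℝ) 1, ∀ y ∈ Set.Icc (0:ℝ) 1, |x - y| ≤ r → |w x - w y| ≤ ε₁ := by
    intro x hx y hy hxy
    simpa [Real.dist_eq] using hrUC x hx y hy (by simpa [Real.dist_eq] using hxy)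
  set η := min r (min m (ε * m / (4 * (B + 1)))) with hηdef
  have hη0 : 0 < η := lt_min hr0 (lt_min hm0 (by positivity))
  have hηr : η ≤ r := min_le_left _ _
  have hηm : η ≤ m := le_trans (min_le_right _ _) (min_le_left _ _)
  have hηB : η ≤ ε * m / (4 * (B + 1)) := le_trans (min_le_right _ _) (min_le_right _ _)
  refine ⟨η, hη0, ?_⟩
  intro δ hδ hdist
  obtain ⟨hδpos, hδ1⟩ := hδ
  rw [Real.dist_eq] at hdist ⊢
  -- the main two-point estimate
  have main : ∀ a b : ℝ, m ≤ a → a ≤ b → b ≤ 1 → b - a < η → G b w ≤ G a w ∧ G a w - G b w < ε := by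
    intro a b hma hab hb1 hba
    have ha0 : 0 < a := lt_of_lt_of_le hm0 hma
    have hb0 : 0 < b := lt_of_lt_of_le ha0 hab
    have hanti : G b w ≤ G a w := G_anti ha0 hab hb1 hC
    refine ⟨hanti, ?_⟩
    have hkey := G_key ha0 hab hb1 hC hε₁.le
      (show b - a ≤ r by linarith) hUC'
    have hGbB : G b w ≤ B := by
      refine le_trans (G_le_bound hb0 hb1 hC) ?_
      rw [hBdef]
      exact div_le_div₀ (by linarith) le_rfl hsqm (Real.sqrt_le_sqrt (by linarith))
    have hba1 : (1:ℝ) ≤ b / a := (one_le_div ha0).2 hab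
    have hs1 : 0 ≤ Real.sqrt (b / a) - 1 := by
      have := Real.one_le_sqrt.2 hba1
      linarith
    have hs2 : Real.sqrt (b / a) - 1 ≤ η / m := by
      have h1' : Real.sqrt (b / a) ≤ b / a := sqrt_le_self_of_one_le hba1
      have h2' : b / a - 1 ≤ η / m := by
        rw [div_sub_one ha0.ne', div_le_div_iff₀ ha0 hm0]
        nlinarith
      linarith
    have h2 : G b w * (Real.sqrt (b / a) - 1) ≤ B * (η / m) :=
      mul_le_mul hGbB hs2 hs1 hB0
    have e1 : (ε * m / (4 * (B + 1))) / m = ε / (4 * (B + 1)) := by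
      field_simp
    have e2 : (B + 1) * (ε / (4 * (B + 1))) = ε / 4 := by
      field_simp
    have h3 : B * (η / m) ≤ ε / 4 := by
      calc B * (η / m) ≤ (B + 1) * (η / m) := by
            have hq : 0 ≤ η / m := by positivity
            nlinarith
        _ ≤ (B + 1) * (ε / (4 * (B + 1))) := by
            refine mul_le_mul_of_nonneg_left ?_ (by linarith)
            rw [← e1]
            exact div_le_div₀ (by positivity) hηB hm0 le_rfl
        _ = ε / 4 := e2
    have h4 : 2 * ε₁ / Real.sqrt a ≤ ε / 4 := by
      have h5 : 2 * ε₁ / Real.sqrt a ≤ 2 * ε₁ / Real.sqrt m :=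
        div_le_div₀ (by linarith) le_rfl hsqm (Real.sqrt_le_sqrt (by linarith))
      have h6 : 2 * ε₁ / Real.sqrt m = ε / 4 := by
        rw [hε₁def]; field_simp; ring
      linarith
    have expand : G b w * Real.sqrt (b / a) = G b w * (Real.sqrt (b / a) - 1) + G b w := by
      ring
    have hfin : G a w - G b w ≤ B * (η / m) + 2 * ε₁ / Real.sqrt a := by
      linarith [hkey, h2, expand]
    linarith [hfin, h3, h4]
  obtain ⟨hd1, hd2⟩ := abs_lt.1 hdist
  rcases le_total δ δ₀ with hle | hle
  · have h := main δ δ₀ (by linarith) hle h1 (by linarith)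
    rw [abs_of_nonneg (by linarith [h.1])]
    linarith [h.2]
  · have h := main δ₀ δ (by linarith) hle hδ1 (by linarith)
    rw [abs_of_nonpos (by linarith [h.1])]
    linarith [h.2]
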